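/- arXiv:1811.03031 — 10 statements merged into one kernel-verified Lean document; each statement's English description precedes it below -/
import Mathlib

section
/- Any directed Hamiltonian cycle on n vertices is uniquely determined by any n−2 of its arcs: if two Hamiltonian cycles H and H' in the complete digraph on n vertices share at least n−2 arcs, then H = H'. -/
/-- A directed Hamiltonian cycle (tour) on `n` vertices, identified with its
characteristic 0/1-matrix: `x i j = 1` iff the arc `(i,j)` is in the cycle. -/
def IsTour (n : ℕ) (x : Fin n → Fin n → ℤ) : Prop :=
  ∃ σ : Equiv.Perm (Fin n), σ.IsCycle ∧ σ.support = Finset.univ ∧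
    ∀ i j, x i j = if σ i = j then 1 else 0

/-- Standard inner product of two `n × n` integer matrices/vectors. -/
def ip {n : ℕ} (x C : Fin n → Fin n → ℤ) : ℤ :=
  ∑ i, ∑ j, x i j * C i j

/-- Any directed Hamiltonian cycle on `n` vertices is determined by any `n - 2`
of its arcs: if two tours share at least `n - 2` arcs, they coincide. -/
theorem stmt0 (n : ℕ) (x y : Fin n → Fin n → ℤ)
    (hx : IsTour n x) (hy : IsTour n y)
    (h : (n : ℤ) - 2 ≤ ip x y) : x = y := by
  obtain ⟨σ, hσc, hσs, hσx⟩ := hx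
  obtain ⟨τ, hτc, hτs, hτx⟩ := hy
  suffices hστ : σ = τ by
    funext i j; rw [hσx, hτx, hστ]
  set π := τ⁻¹ * σ with hπ
  have hsupp : π.support = Finset.univ.filter (fun i => ¬ σ i = τ i) := by
    ext i
    simp only [Equiv.Perm.mem_support, hπ, Equiv.Perm.mul_apply,
      Finset.mem_filter, Finset.mem_univ, true_and]
    rw [not_iff_not, Equiv.Perm.inv_eq_iff_eq]
  have key : ∀ i : Fin n, ∑ j, (if σ i = j then (1:ℤ) else 0) *
      (if τ i = j then 1 else 0) = if σ i = τ i then 1 else 0 := by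
    intro i
    rw [Finset.sum_eq_single (σ i)]
    · simp [eq_comm]
    · intro b _ hb; simp [Ne.symm hb]
    · simp
  have hip : ip x y = ((Finset.univ.filter (fun i => σ i = τ i)).card : ℤ) := by
    unfold ip
    simp only [hσx, hτx]
    rw [Finset.sum_congr rfl (fun i _ => key i), Finset.sum_boole]
  have hcards : (Finset.univ.filter (fun i => σ i = τ i)).card
      + (Finset.univ.filter (fun i => ¬ σ i = τ i)).card = n := by
    rw [Finset.card_filter_add_card_filter_not]
    simp
  have hle : π.support.card ≤ 2 := by
    rw [hsupp]
    rw [hip] at h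
    omega
  have hcase : π = 1 ∨ π.IsSwap := by
    rcases Nat.lt_or_ge π.support.card 2 with hl | hl
    · exact Or.inl (Equiv.Perm.card_support_le_one.mp (Nat.lt_succ_iff.mp hl))
    · exact Or.inr (Equiv.Perm.card_support_eq_two.mp (le_antisymm hle hl))
  rcases hcase with h1 | ⟨a, b, hab, hswap⟩
  · exact (inv_mul_eq_one.mp h1).symm
  · exfalso
    have hs : Equiv.Perm.sign σ = Equiv.Perm.sign τ := by
      rw [hσc.sign, hτc.sign, hσs, hτs]
    have h2 : Equiv.Perm.sign π = 1 := by
      rw [hπ, map_mul, map_inv, hs]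
      simp
    rw [hswap, Equiv.Perm.sign_swap hab] at h2
    exact absurd h2 (by decide)
end

section
/- For characteristic vectors x, y of two distinct directed Hamiltonian cycles on n vertices, the inner product ⟨x, y⟩ (i.e. the number of common arcs) is at most n−3. -/
/-- Two distinct `n`-cycles disagree in at least 3 places. -/
lemma three_le_card_disagree {n : ℕ} (σ τ : Equiv.Perm (Fin n))
    (hσc : σ.IsCycle) (hτc : τ.IsCycle)
    (hσs : σ.support = Finset.univ) (hτs : τ.support = Finset.univ)
    (hne : σ ≠ τ) :
    3 ≤ (Finset.univ.filter (fun i => σ i ≠ τ i)).card := by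
  set K := Finset.univ.filter (fun i => σ i ≠ τ i) with hK
  have memK : ∀ i, i ∈ K ↔ σ i ≠ τ i := by
    intro i; simp [hK]
  by_contra hlt
  push_neg at hlt
  -- K is nonempty
  have hKne : K.Nonempty := by
    rcases Finset.eq_empty_or_nonempty K with h | h
    · exfalso; apply hne; apply Equiv.ext; intro i
      have : i ∉ K := by simp [h]
      have := (memK i).not.mp this
      push_neg at this
      exact this
    · exact h
  interval_cases h : K.card
  · exact absurd (Finset.card_eq_zero.mp h) (Finset.nonempty_iff_ne_empty.mp hKne)
  · -- exactly one disagreement: impossible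
    obtain ⟨a, ha⟩ := Finset.card_eq_one.mp h
    have haK : σ a ≠ τ a := (memK a).mp (by simp [ha])
    have agree : ∀ i, i ≠ a → σ i = τ i := by
      intro i hi
      have : i ∉ K := by simp [ha, hi]
      have := (memK i).not.mp this
      push_neg at this; exact this
    have hc : σ (σ⁻¹ (τ a)) = τ a := by simp
    by_cases hca : σ⁻¹ (τ a) = a
    · exact haK ((congrArg σ hca).symm.trans hc)
    · have : τ (σ⁻¹ (τ a)) = τ a := by rw [← agree _ hca, hc]
      exact hca (τ.injective this)
  · -- exactly two disagreements: sign contradiction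
    obtain ⟨a, b, hab, hKab⟩ := Finset.card_eq_two.mp h
    have haK : σ a ≠ τ a := (memK a).mp (by simp [hKab])
    have hbK : σ b ≠ τ b := (memK b).mp (by simp [hKab])
    have agree : ∀ i, i ≠ a → i ≠ b → σ i = τ i := by
      intro i hia hib
      have : i ∉ K := by simp [hKab, hia, hib]
      have := (memK i).not.mp this
      push_neg at this; exact this
    have hba : σ b = τ a := by
      have hc : σ (σ⁻¹ (τ a)) = τ a := by simp
      by_cases hca : σ⁻¹ (τ a) = a
      · exact absurd ((congrArg σ hca).symm.trans hc) haK
      · by_cases hcb : σ⁻¹ (τ a) = b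
        · exact (congrArg σ hcb).symm.trans hc
        · exfalso
          have : τ (σ⁻¹ (τ a)) = τ a := by rw [← agree _ hca hcb, hc]
          exact hca (τ.injective this)
    have hab' : σ a = τ b := by
      have hc : σ (σ⁻¹ (τ b)) = τ b := by simp
      by_cases hcb : σ⁻¹ (τ b) = b
      · exact absurd ((congrArg σ hcb).symm.trans hc) hbK
      · by_cases hca : σ⁻¹ (τ b) = a
        · exact (congrArg σ hca).symm.trans hc
        · exfalso
          have : τ (σ⁻¹ (τ b)) = τ b := by rw [← agree _ hca hcb, hc]
          exact hcb (τ.injective this)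
    have heq : τ = σ * Equiv.swap a b := by
      ext i
      by_cases hia : i = a
      · subst hia
        simp [Equiv.Perm.mul_apply, Equiv.swap_apply_left, hba.symm]
      · by_cases hib : i = b
        · subst hib
          simp [Equiv.Perm.mul_apply, Equiv.swap_apply_right, hab'.symm]
        · simp [Equiv.Perm.mul_apply, Equiv.swap_apply_of_ne_of_ne hia hib,
            agree i hia hib]
    have hsσ : Equiv.Perm.sign σ = -(-1) ^ n := by
      rw [hσc.sign, hσs, Finset.card_univ, Fintype.card_fin]
    have hsτ : Equiv.Perm.sign τ = -(-1) ^ n := by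
      rw [hτc.sign, hτs, Finset.card_univ, Fintype.card_fin]
    have hst : Equiv.Perm.sign τ = Equiv.Perm.sign σ * (-1) := by
      rw [heq]
      simp [Equiv.Perm.sign_swap hab]
    rw [hsσ, hsτ] at hst
    have h1 : (1 : ℤˣ) = -1 :=
      mul_left_cancel (a := (-(-1) ^ n : ℤˣ)) (by rw [mul_one]; exact hst)
    exact absurd h1 (by decide)

/-- Two distinct directed Hamiltonian cycles on `n` vertices share at most
`n - 3` arcs. -/
theorem stmt1 (n : ℕ) (x y : Fin n → Fin n → ℤ)
    (hx : IsTour n x) (hy : IsTour n y) (hxy : x ≠ y) :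
    ip x y ≤ (n : ℤ) - 3 := by
  obtain ⟨σ, hσc, hσs, hσ⟩ := hx
  obtain ⟨τ, hτc, hτs, hτ⟩ := hy
  have hne : σ ≠ τ := by
    rintro rfl
    apply hxy
    ext i j; rw [hσ, hτ]
  -- compute the inner product
  have hip : ip x y = ((Finset.univ.filter (fun i => σ i = τ i)).card : ℤ) := by
    unfold ip
    rw [← Finset.sum_boole]
    apply Finset.sum_congr rfl
    intro i _
    have : ∀ j, x i j * y i j = if σ i = j then (if τ i = j then (1:ℤ) else 0) else 0 := by
      intro j; rw [hσ, hτ]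
      by_cases h1 : σ i = j <;> by_cases h2 : τ i = j <;> simp [h1, h2]
    rw [Finset.sum_congr rfl (fun j _ => this j), Finset.sum_ite_eq]
    simp [eq_comm]
  have hcard := Finset.card_filter_add_card_filter_not
    (s := Finset.univ (α := Fin n)) (p := fun i => σ i = τ i)
  have h3 := three_le_card_disagree σ τ hσc hτc hσs hτs hne
  rw [hip]
  have : (Finset.univ.filter (fun i => σ i = τ i)).card +
      (Finset.univ.filter (fun i => σ i ≠ τ i)).card = n := by
    simpa using hcard
  omega
end

section
/- Let y be the characteristic vector of a Hamiltonian cycle in the complete digraph on n vertices, and let B⁺, B⁻ ∈ {0,1}^{n²} satisfy ⟨B⁺, B⁻⟩ = 0, ⟨B⁺, 1⟩ = ⟨B⁻, 1⟩ > 0, and ⟨B⁺, y⟩ ≤ 2. Then there exists an integer cost vector C ∈ ℤ^{n²} such that ⟨B⁺, C⟩ − ⟨B⁻, C⟩ > 0 and simultaneously ⟨y, C⟩ < ⟨x, C⟩ for every characteristic vector x of a Hamiltonian cycle with x ≠ y (i.e. C lies in the interior-type cone where y is the unique optimum). -/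
/-- Lemma 1 of the paper: if `B⁺, B⁻` are disjoint 0/1-vectors of equal positive
weight and `⟨B⁺, y⟩ ≤ 2` for a tour `y`, then the strict inequality
`⟨B⁺ - B⁻, C⟩ > 0` is compatible with `y` being the unique optimum for `C`. -/
theorem stmt2 (n : ℕ) (y Bp Bm : Fin n → Fin n → ℤ)
    (hy : IsTour n y)
    (hBp : ∀ i j, Bp i j = 0 ∨ Bp i j = 1)
    (hBm : ∀ i j, Bm i j = 0 ∨ Bm i j = 1)
    (horth : ip Bp Bm = 0)
    (heq : ip Bp (fun _ _ => 1) = ip Bm (fun _ _ => 1))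
    (hpos : 0 < ip Bp (fun _ _ => 1))
    (hy2 : ip Bp y ≤ 2) :
    ∃ C : Fin n → Fin n → ℤ,
      0 < ip Bp C - ip Bm C ∧
      ∀ x : Fin n → Fin n → ℤ, IsTour n x → x ≠ y → ip y C < ip x C := by
  classical
  obtain ⟨σ, hσc, hσs, hyv⟩ := hy
  -- pointwise orthogonality
  have hnn : ∀ i j, (0:ℤ) ≤ Bp i j * Bm i j := by
    intro i j; rcases hBp i j with h|h <;> rcases hBm i j with h'|h' <;> simp [h, h']
  have horth' : ∑ i, ∑ j, Bp i j * Bm i j = 0 := horth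
  have hprod0 : ∀ i j, Bp i j * Bm i j = 0 := by
    intro i j
    have h1 : ∀ i ∈ (Finset.univ : Finset (Fin n)), (0:ℤ) ≤ ∑ j, Bp i j * Bm i j :=
      fun i _ => Finset.sum_nonneg fun j _ => hnn i j
    have h2 := (Finset.sum_eq_zero_iff_of_nonneg h1).mp horth'
    have h3 := (Finset.sum_eq_zero_iff_of_nonneg (fun j _ => hnn i j)).mp
      (h2 i (Finset.mem_univ i))
    exact h3 j (Finset.mem_univ j)
  set C : Fin n → Fin n → ℤ := fun i j => if Bp i j = 0 ∧ σ i = j then 0 else 4 - Bm i j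
    with hCdef
  have hCval : ∀ i j, C i j = if Bp i j = 0 ∧ σ i = j then 0 else 4 - Bm i j :=
    fun i j => rfl
  have hC0 : ∀ i j, (0:ℤ) ≤ C i j := by
    intro i j; rw [hCval]; split
    · norm_num
    · rcases hBm i j with h|h <;> simp [h]
  have hC3 : ∀ i j, ¬(Bp i j = 0 ∧ σ i = j) → (3:ℤ) ≤ C i j := by
    intro i j h; rw [hCval, if_neg h]
    rcases hBm i j with h'|h' <;> simp [h']
  have hCBp : ∀ i j, Bp i j = 1 → C i j = 4 := by
    intro i j h
    have hm : Bm i j = 0 := by have := hprod0 i j; rw [h, one_mul] at this; exact this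
    rw [hCval, if_neg (by simp [h]), hm]; ring
  refine ⟨C, ?_, ?_⟩
  · -- part 1
    have hBpC : ip Bp C = 4 * ip Bp (fun _ _ => 1) := by
      show (∑ i, ∑ j, Bp i j * C i j) = 4 * ∑ i, ∑ j, Bp i j * 1
      rw [Finset.mul_sum]
      refine Finset.sum_congr rfl fun i _ => ?_
      rw [Finset.mul_sum]
      refine Finset.sum_congr rfl fun j _ => ?_
      rcases hBp i j with h|h
      · simp [h]
      · rw [hCBp i j h, h]; ring
    have hBmC : ip Bm C ≤ 3 * ip Bm (fun _ _ => 1) := by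
      show (∑ i, ∑ j, Bm i j * C i j) ≤ 3 * ∑ i, ∑ j, Bm i j * 1
      rw [Finset.mul_sum]
      refine Finset.sum_le_sum fun i _ => ?_
      rw [Finset.mul_sum]
      refine Finset.sum_le_sum fun j _ => ?_
      rcases hBm i j with h|h
      · simp [h]
      · have hp : Bp i j = 0 := by
          have := hprod0 i j; rcases hBp i j with h'|h'
          · exact h'
          · rw [h', h] at this; norm_num at this
        have : C i j ≤ 3 := by
          rw [hCval]; split
          · norm_num
          · rw [h]; norm_num
        nlinarith [this, hC0 i j]
    linarith
  · -- part 2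
    intro x hx hxy
    obtain ⟨τ, hτc, hτs, hxv⟩ := hx
    have hτσ : τ ≠ σ := by
      intro h; apply hxy; funext i j; rw [hxv, hyv, h]
    have hyC : ip y C = 4 * ∑ i, Bp i (σ i) := by
      show (∑ i, ∑ j, y i j * C i j) = _
      rw [Finset.mul_sum]
      refine Finset.sum_congr rfl fun i _ => ?_
      have h1 : ∑ j, y i j * C i j = C i (σ i) := by
        simp [hyv, ite_mul, Finset.sum_ite_eq]
      rw [h1]
      rcases hBp i (σ i) with h|h
      · rw [hCval, if_pos ⟨h, rfl⟩, h]; ring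
      · rw [hCBp _ _ h, h]; ring
    have hBpy : ip Bp y = ∑ i, Bp i (σ i) := by
      show (∑ i, ∑ j, Bp i j * y i j) = _
      refine Finset.sum_congr rfl fun i _ => ?_
      simp [hyv, mul_ite, Finset.sum_ite_eq]
    have hxC : ip x C = ∑ i, C i (τ i) := by
      show (∑ i, ∑ j, x i j * C i j) = _
      refine Finset.sum_congr rfl fun i _ => ?_
      simp [hxv, ite_mul, Finset.sum_ite_eq]
    set π := σ⁻¹ * τ with hπdef
    have hπ1 : π ≠ 1 := by
      intro h
      apply hτσ
      have h2 : σ * π = τ := by rw [hπdef, mul_inv_cancel_left]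
      rw [h, mul_one] at h2; exact h2.symm
    have h2card : 1 < π.support.card := Equiv.Perm.one_lt_card_support_of_ne_one hπ1
    have hsign : Equiv.Perm.sign π = 1 := by
      have hcσ : Equiv.Perm.sign σ = -(-1)^σ.support.card := hσc.sign
      have hcτ : Equiv.Perm.sign τ = -(-1)^τ.support.card := hτc.sign
      have hst : Equiv.Perm.sign τ = Equiv.Perm.sign σ := by
        rw [hcσ, hcτ, hσs, hτs]
      rw [hπdef, map_mul, map_inv, hst]
      simp
    have h3card : π.support.card ≠ 2 := by
      intro h
      obtain ⟨a, b, hab, hsw⟩ := Equiv.Perm.card_support_eq_two.mp h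
      rw [hsw, Equiv.Perm.sign_swap hab] at hsign
      exact absurd hsign (by decide)
    have hcard3 : 3 ≤ π.support.card := by omega
    have hlow : (9:ℤ) ≤ ∑ i, C i (τ i) := by
      have hterm : ∀ i ∈ π.support, (3:ℤ) ≤ C i (τ i) := by
        intro i hi
        have hne : π i ≠ i := Equiv.Perm.mem_support.mp hi
        have hne2 : σ i ≠ τ i := by
          intro h
          apply hne
          rw [hπdef]
          simp [← h]
        exact hC3 i (τ i) (by rintro ⟨-, h⟩; exact hne2 h)
      calc (9:ℤ) ≤ 3 * (π.support.card : ℤ) := by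
              have : (3:ℤ) ≤ (π.support.card : ℤ) := by exact_mod_cast hcard3
              linarith
        _ = ∑ _i ∈ π.support, (3:ℤ) := by
              rw [Finset.sum_const, nsmul_eq_mul, mul_comm]
        _ ≤ ∑ i ∈ π.support, C i (τ i) := Finset.sum_le_sum hterm
        _ ≤ ∑ i, C i (τ i) :=
              Finset.sum_le_sum_of_subset_of_nonneg (Finset.subset_univ _)
                (fun i _ _ => hC0 i (τ i))
    have hBpy2 : ∑ i, Bp i (σ i) ≤ 2 := by rw [← hBpy]; exact hy2
    rw [hyC, hxC]
    linarith
end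

section
/- With C constructed as C := 4·1 − B⁻ followed by setting C_{ij} := 0 for all (i,j) with y_{ij} = 1 and B⁺_{ij} = 0 (where ⟨B⁺,B⁻⟩=0, ⟨B⁺,1⟩=⟨B⁻,1⟩>0, and ⟨B⁺,y⟩ ≤ 2), one has ⟨B⁺, C⟩ − ⟨B⁻, C⟩ ≥ ⟨B⁻, B⁻⟩ > 0. -/
/-! On the support of `B⁺` the cost `C` is `4` (the zeroing only touches entries with `B⁺ = 0`),
while on the support of `B⁻`, disjoint from it, `C` is at most `4 - 1 = 3`. Hence
`⟨B⁺, C⟩ - ⟨B⁻, C⟩ ≥ 4 ⟨B⁺, 1⟩ - 3 ⟨B⁻, 1⟩ = ⟨B⁻, 1⟩ = ⟨B⁻, B⁻⟩ > 0`. -/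

section InnerProduct

variable {n : ℕ}

lemma ip_le_ip {x C z D : Fin n → Fin n → ℤ} (h : ∀ i j, x i j * C i j ≤ z i j * D i j) :
    ip x C ≤ ip z D :=
  Finset.sum_le_sum fun i _ => Finset.sum_le_sum fun j _ => h i j

lemma ip_const_right (x : Fin n → Fin n → ℤ) (c : ℤ) :
    ip x (fun _ _ => c) = c * ip x (fun _ _ => 1) := by
  simp only [ip, mul_one, Finset.mul_sum]
  exact Finset.sum_congr rfl fun i _ => Finset.sum_congr rfl fun j _ => mul_comm _ _

lemma ip_self_of_binary {x : Fin n → Fin n → ℤ} (hx : ∀ i j, x i j = 0 ∨ x i j = 1) :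
    ip x x = ip x (fun _ _ => 1) :=
  Finset.sum_congr rfl fun i _ => Finset.sum_congr rfl fun j _ => by
    rcases hx i j with h | h <;> simp [h]

lemma mul_eq_zero_of_ip_eq_zero {x z : Fin n → Fin n → ℤ} (hx : ∀ i j, 0 ≤ x i j)
    (hz : ∀ i j, 0 ≤ z i j) (h : ip x z = 0) (i j : Fin n) : x i j * z i j = 0 := by
  have hnonneg : ∀ i j, 0 ≤ x i j * z i j := fun i j => mul_nonneg (hx i j) (hz i j)
  have hrow := (Finset.sum_eq_zero_iff_of_nonneg fun i _ =>
    Finset.sum_nonneg fun j _ => hnonneg i j).mp h i (Finset.mem_univ i)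
  exact (Finset.sum_eq_zero_iff_of_nonneg fun j _ => hnonneg i j).mp hrow j (Finset.mem_univ j)

end InnerProduct

lemma nonneg_of_binary {x : ℤ} (hx : x = 0 ∨ x = 1) : 0 ≤ x := by
  rcases hx with rfl | rfl <;> norm_num

section Entries

variable {p m : ℤ} (P : Prop) [Decidable P]

lemma mul_four_le_mul_cost (hpm : p * m = 0) :
    p * 4 ≤ p * (if P ∧ p = 0 then 0 else 4 - m) := by
  by_cases hp : p = 0
  · simp [hp]
  · obtain rfl : m = 0 := (mul_eq_zero.mp hpm).resolve_left hp
    simp [hp]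

lemma mul_cost_le_mul_three (hm : m = 0 ∨ m = 1) (hpm : p * m = 0) :
    m * (if P ∧ p = 0 then 0 else 4 - m) ≤ m * 3 := by
  rcases hm with rfl | rfl
  · simp
  · obtain rfl : p = 0 := by simpa using hpm
    split_ifs <;> norm_num

end Entries

theorem stmt3_general (n : ℕ) (y Bp Bm : Fin n → Fin n → ℤ)
    (hBp : ∀ i j, Bp i j = 0 ∨ Bp i j = 1)
    (hBm : ∀ i j, Bm i j = 0 ∨ Bm i j = 1)
    (horth : ip Bp Bm = 0)
    (heq : ip Bp (fun _ _ => 1) = ip Bm (fun _ _ => 1))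
    (hpos : 0 < ip Bp (fun _ _ => 1))
    (C : Fin n → Fin n → ℤ)
    (hC : ∀ i j, C i j = if y i j = 1 ∧ Bp i j = 0 then 0 else 4 - Bm i j) :
    ip Bm Bm ≤ ip Bp C - ip Bm C ∧ 0 < ip Bm Bm := by
  have hdisj := mul_eq_zero_of_ip_eq_zero (fun i j => nonneg_of_binary (hBp i j))
    (fun i j => nonneg_of_binary (hBm i j)) horth
  have hCp : 4 * ip Bp (fun _ _ => 1) ≤ ip Bp C := by
    rw [← ip_const_right]
    exact ip_le_ip fun i j => by rw [hC]; exact mul_four_le_mul_cost _ (hdisj i j)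
  have hCm : ip Bm C ≤ 3 * ip Bm (fun _ _ => 1) := by
    rw [← ip_const_right]
    exact ip_le_ip fun i j => by
      rw [hC]; exact mul_cost_le_mul_three _ (hBm i j) (hdisj i j)
  rw [ip_self_of_binary hBm, ← heq]
  constructor <;> linarith

/-- With `C := 4·1 - B⁻` zeroed on `S = {(i,j) : y i j = 1, B⁺ i j = 0}`,
one has `⟨B⁺, C⟩ - ⟨B⁻, C⟩ ≥ ⟨B⁻, B⁻⟩ > 0`. -/
theorem stmt3 (n : ℕ) (y Bp Bm : Fin n → Fin n → ℤ)
    (hy : IsTour n y)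
    (hBp : ∀ i j, Bp i j = 0 ∨ Bp i j = 1)
    (hBm : ∀ i j, Bm i j = 0 ∨ Bm i j = 1)
    (horth : ip Bp Bm = 0)
    (heq : ip Bp (fun _ _ => 1) = ip Bm (fun _ _ => 1))
    (hpos : 0 < ip Bp (fun _ _ => 1))
    (hy2 : ip Bp y ≤ 2)
    (C : Fin n → Fin n → ℤ)
    (hC : ∀ i j, C i j = if y i j = 1 ∧ Bp i j = 0 then 0 else 4 - Bm i j) :
    ip Bm Bm ≤ ip Bp C - ip Bm C ∧ 0 < ip Bm Bm :=
  stmt3_general n y Bp Bm hBp hBm horth heq hpos C hC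
end

section
/- Under the construction of Lemma 1 (C = 4·1 − B⁻ with C zeroed on the arc set S = {(i,j) : y_{ij}=1, B⁺_{ij}=0}, and ⟨B⁺,y⟩ ≤ 2), the objective value of y satisfies ⟨y, C⟩ ≤ 8, while ⟨x, C⟩ ≥ 9 for every characteristic vector x of a Hamiltonian cycle distinct from y. -/
/-- Under the construction of Lemma 1 (for `n ≥ 3`), the tour `y` has value
`⟨y, C⟩ ≤ 8`, while every other tour `x` has value `⟨x, C⟩ ≥ 9`. -/
theorem stmt4 (n : ℕ) (hn : 3 ≤ n) (y Bp Bm : Fin n → Fin n → ℤ)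
    (hy : IsTour n y)
    (hBp : ∀ i j, Bp i j = 0 ∨ Bp i j = 1)
    (hBm : ∀ i j, Bm i j = 0 ∨ Bm i j = 1)
    (horth : ip Bp Bm = 0)
    (heq : ip Bp (fun _ _ => 1) = ip Bm (fun _ _ => 1))
    (hpos : 0 < ip Bp (fun _ _ => 1))
    (hy2 : ip Bp y ≤ 2)
    (C : Fin n → Fin n → ℤ)
    (hC : ∀ i j, C i j = if y i j = 1 ∧ Bp i j = 0 then 0 else 4 - Bm i j) :
    ip y C ≤ 8 ∧
    ∀ x : Fin n → Fin n → ℤ, IsTour n x → x ≠ y → 9 ≤ ip x C := by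
  obtain ⟨σ, hσc, hσs, hydef⟩ := hy
  have hipy : ip y C = ∑ i, C i (σ i) := by
    simp [ip, hydef, ite_mul, one_mul, zero_mul]
  have hipBpy : ip Bp y = ∑ i, Bp i (σ i) := by
    simp [ip, hydef, mul_ite, mul_one, mul_zero]
  constructor
  · rw [hipy]
    calc ∑ i, C i (σ i) ≤ ∑ i, 4 * Bp i (σ i) := by
          apply Finset.sum_le_sum
          intro i _
          rw [hC]
          have hyi : y i (σ i) = 1 := by simp [hydef]
          rcases hBp i (σ i) with h | h <;> rcases hBm i (σ i) with h' | h' <;>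
            simp [h, h', hyi]
      _ = 4 * ip Bp y := by rw [hipBpy, Finset.mul_sum]
      _ ≤ 8 := by linarith
  · intro x hx hne
    obtain ⟨τ, hτc, hτs, hxdef⟩ := hx
    have hipx : ip x C = ∑ i, C i (τ i) := by
      simp [ip, hxdef, ite_mul, one_mul, zero_mul]
    have hστ : σ ≠ τ := by
      intro h; apply hne; funext i j; rw [hxdef, hydef, h]
    have hsign : Equiv.Perm.sign σ = Equiv.Perm.sign τ := by
      rw [hσc.sign, hτc.sign, hσs, hτs]
    have hne1 : σ⁻¹ * τ ≠ 1 := by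
      rw [Ne, inv_mul_eq_one]; exact hστ
    have h2 : 1 < (σ⁻¹ * τ).support.card :=
      Equiv.Perm.one_lt_card_support_of_ne_one hne1
    have hne2 : (σ⁻¹ * τ).support.card ≠ 2 := by
      intro h
      obtain ⟨a, b, hab, hswap⟩ := Equiv.Perm.card_support_eq_two.mp h
      have hs : Equiv.Perm.sign (σ⁻¹ * τ) = -1 := by
        rw [hswap, Equiv.Perm.sign_swap hab]
      rw [Equiv.Perm.sign_mul, Equiv.Perm.sign_inv, ← hsign] at hs
      simp at hs
    have h3 : 3 ≤ (σ⁻¹ * τ).support.card := by omega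
    rw [hipx]
    have hnn : ∀ i, (0:ℤ) ≤ C i (τ i) := by
      intro i; rw [hC]
      rcases hBm i (τ i) with h | h <;> split <;> simp [h]
    have hge3 : ∀ i ∈ (σ⁻¹ * τ).support, (3:ℤ) ≤ C i (τ i) := by
      intro i hi
      rw [Equiv.Perm.mem_support] at hi
      have hτσ : σ i ≠ τ i := by
        intro h; apply hi; simp [Equiv.Perm.mul_apply, ← h]
      have hy0 : y i (τ i) = 0 := by
        rw [hydef, if_neg hτσ]
      rw [hC, hy0]
      rcases hBm i (τ i) with h | h <;> simp [h]
    have hcard : (3:ℤ) ≤ ((σ⁻¹ * τ).support.card : ℤ) := by exact_mod_cast h3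
    calc (9:ℤ) ≤ (σ⁻¹ * τ).support.card • (3:ℤ) := by
          rw [nsmul_eq_mul]; nlinarith
      _ ≤ ∑ i ∈ (σ⁻¹ * τ).support, C i (τ i) :=
          Finset.card_nsmul_le_sum _ _ _ hge3
      _ ≤ ∑ i, C i (τ i) :=
          Finset.sum_le_sum_of_subset_of_nonneg (Finset.subset_univ _)
            (fun i _ _ => hnn i)
end

section
/- Let C ∈ ℤ^{5×5} satisfy c_{12} ≤ c_{13}, c_{12} ≤ c_{14}, c_{12} ≤ c_{15}, c_{21} ≤ c_{23}, c_{21} ≤ c_{24}, c_{21} ≤ c_{25}, c_{31} > c_{32}, c_{32} > c_{34}, c_{34} > c_{35}, and c_{41} ≤ c_{42}. Then the Hamiltonian cycle y with arcs {(1,5),(5,4),(4,2),(2,3),(3,1)} satisfies ⟨y, C⟩ > ⟨y', C⟩ where y' has arcs {(1,2),(2,3),(3,5),(5,4),(4,1)}. In particular y is not optimal for any such C. -/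
/-- The nine branching inequalities `(2)` of the paper. -/
def Conds (C : Fin 5 → Fin 5 → ℤ) : Prop :=
  C 0 1 ≤ C 0 2 ∧ C 0 1 ≤ C 0 3 ∧ C 0 1 ≤ C 0 4 ∧
  C 1 0 ≤ C 1 2 ∧ C 1 0 ≤ C 1 3 ∧ C 1 0 ≤ C 1 4 ∧
  C 2 0 > C 2 1 ∧ C 2 1 > C 2 3 ∧ C 2 3 > C 2 4

/-- Under the nine conditions and `c₄₁ ≤ c₄₂`, the tour `y` (arcs
`(1,5),(5,4),(4,2),(2,3),(3,1)`) is strictly beaten by `y'` (arcs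
`(1,2),(2,3),(3,5),(5,4),(4,1)`); in particular `y` is not optimal. -/
theorem stmt12 (C : Fin 5 → Fin 5 → ℤ) (h : Conds C) (h10 : C 3 0 ≤ C 3 1)
    (y y' : Fin 5 → Fin 5 → ℤ)
    (hy : y = fun i j =>
      !![0,0,0,0,1; 0,0,1,0,0; 1,0,0,0,0; 0,1,0,0,0; 0,0,0,1,0] i j)
    (hy' : y' = fun i j =>
      !![0,1,0,0,0; 0,0,1,0,0; 0,0,0,0,1; 1,0,0,0,0; 0,0,0,1,0] i j) :
    ip y C > ip y' C ∧
      ¬ (∀ s : Fin 5 → Fin 5 → ℤ, IsTour 5 s → ip y C ≤ ip s C) := by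
  obtain ⟨h1, h2, h3, h4, h5, h6, h7, h8, h9⟩ := h
  have hgt : ip y C > ip y' C := by
    subst hy hy'
    simp [ip, Fin.sum_univ_five, Matrix.cons_val_zero, Matrix.cons_val_one,
      Matrix.vecHead, Matrix.vecTail]
    linarith
  refine ⟨hgt, fun hall => ?_⟩
  have htour : IsTour 5 y' := by
    refine ⟨(Equiv.swap 3 4) * finRotate 5 * (Equiv.swap 3 4), ?_, ?_, ?_⟩
    · simpa using (isCycle_finRotate (n := 3)).conj (g := Equiv.swap 3 4)
    · decide
    · subst hy'; decide
  exact absurd (hall y' htour) (not_le.mpr hgt)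
end

section
/- There exist four distinct Hamiltonian cycles x, y, z, w on 5 vertices and, for each t ∈ {x,y,z,w}, an integer cost matrix C_t satisfying the nine branching conditions (c_{12} ≤ c_{13}, c_{14}, c_{15}; c_{21} ≤ c_{23}, c_{24}, c_{25}; c_{31} > c_{32} > c_{34} > c_{35} in the chain sense c_{31}>c_{32}, c_{32}>c_{34}, c_{34}>c_{35}) under which t is the unique optimal tour; yet whenever additionally c_{41} > c_{42} neither z nor w can be optimal, and whenever additionally c_{41} ≤ c_{42} neither x nor y can be optimal. -/
/-- `t` is the unique optimal tour for the input `C`. -/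
def UniqueOpt (t C : Fin 5 → Fin 5 → ℤ) : Prop :=
  ∀ s : Fin 5 → Fin 5 → ℤ, IsTour 5 s → s ≠ t → ip t C < ip s C

/-- `t` is an optimal tour for the input `C`. -/
def Opt (t C : Fin 5 → Fin 5 → ℤ) : Prop :=
  ∀ s : Fin 5 → Fin 5 → ℤ, IsTour 5 s → ip t C ≤ ip s C

open Equiv Finset

def tourOf {n : ℕ} (σ : Perm (Fin n)) : Fin n → Fin n → ℤ :=
  fun i j => if σ i = j then 1 else 0

theorem tourOf_injective {n : ℕ} : Function.Injective (tourOf (n := n)) := by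
  intro σ τ h
  refine Equiv.ext fun i => ?_
  have h' := congrFun (congrFun h i) (σ i)
  simpa [tourOf, eq_comm] using h'

theorem ip_tourOf {n : ℕ} (σ : Perm (Fin n)) (C : Fin n → Fin n → ℤ) :
    ip (tourOf σ) C = ∑ i, C i (σ i) := by
  simp [ip, tourOf, ite_mul]

namespace Equiv.Perm

variable {α : Type*} [Fintype α] [DecidableEq α] {σ : Perm α}

theorem IsCycle.pow_card_eq_one (hc : σ.IsCycle) (hs : σ.support = univ) :
    σ ^ Fintype.card α = 1 := by
  rw [← card_univ, ← hs, ← hc.orderOf, pow_orderOf_eq_one]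

theorem isCycle_and_support_eq_univ_of_pow_card_eq_one (hp : (Fintype.card α).Prime)
    (h1 : σ ≠ 1) (h : σ ^ Fintype.card α = 1) : σ.IsCycle ∧ σ.support = univ := by
  have hord : orderOf σ = Fintype.card α :=
    ((hp.eq_one_or_self_of_dvd _ (orderOf_dvd_of_pow_eq_one h)).resolve_left
      (fun h' => h1 (orderOf_eq_one_iff.mp h')))
  have hc : σ.IsCycle := isCycle_of_prime_order'' hp hord
  exact ⟨hc, eq_univ_of_card _ (hc.orderOf ▸ hord)⟩

end Equiv.Perm

theorem IsTour.exists_pow_eq_one {n : ℕ} {s : Fin n → Fin n → ℤ} (hs : IsTour n s) :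
    ∃ σ : Perm (Fin n), σ ^ n = 1 ∧ s = tourOf σ := by
  obtain ⟨σ, hc, hsupp, hval⟩ := hs
  refine ⟨σ, ?_, funext fun i => funext (hval i)⟩
  simpa using hc.pow_card_eq_one hsupp

theorem isTour_tourOf {p : ℕ} (hp : p.Prime) {σ : Perm (Fin p)} (h1 : σ ≠ 1) (h : σ ^ p = 1) :
    IsTour p (tourOf σ) := by
  obtain ⟨hc, hs⟩ :=
    Perm.isCycle_and_support_eq_univ_of_pow_card_eq_one (by simpa using hp) h1 (by simpa using h)
  exact ⟨σ, hc, hs, fun _ _ => rfl⟩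

theorem uniqueOpt_tourOf (t : Perm (Fin 5)) (C : Fin 5 → Fin 5 → ℤ)
    (h : ∀ f : Fin 5 → Fin 5, f^[5] = id → f ≠ t → ∑ i, C i (t i) < ∑ i, C i (f i)) :
    UniqueOpt (tourOf t) C := by
  intro s hs hne
  obtain ⟨σ, hσ, rfl⟩ := hs.exists_pow_eq_one
  rw [ip_tourOf, ip_tourOf]
  refine h σ (by rw [Perm.iterate_eq_pow, hσ, Perm.coe_one]) fun hσt => hne ?_
  rw [DFunLike.coe_injective hσt]

theorem not_opt_tourOf_of_lt {t s : Perm (Fin 5)} {C : Fin 5 → Fin 5 → ℤ} (hs1 : s ≠ 1)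
    (hs : s ^ 5 = 1) (h : ∑ i, C i (s i) < ∑ i, C i (t i)) : ¬ Opt (tourOf t) C := by
  intro hopt
  have := hopt _ (isTour_tourOf Nat.prime_five hs1 hs)
  rw [ip_tourOf, ip_tourOf] at this
  exact this.not_gt h

-- Vertex `k` of the paper is `k - 1` here: `σx` is the tour `1 → 4 → 2 → 5 → 3 → 1`.
def σx : Perm (Fin 5) := c[0, 3, 1, 4, 2]
def σy : Perm (Fin 5) := c[0, 4, 3, 1, 2]
def σz : Perm (Fin 5) := c[0, 2, 1, 4, 3]
def σw : Perm (Fin 5) := c[0, 4, 2, 1, 3]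

-- `σt'` is `σt` with three arcs exchanged.
def σx' : Perm (Fin 5) := c[0, 1, 4, 2, 3]
def σy' : Perm (Fin 5) := c[0, 1, 2, 4, 3]
def σz' : Perm (Fin 5) := c[0, 2, 4, 3, 1]
def σw' : Perm (Fin 5) := c[0, 4, 2, 3, 1]

-- `100` plays the paper's `∞`; the entries below `100` of each matrix admit exactly one tour.
def Cx : Fin 5 → Fin 5 → ℤ :=
  ![![100, 0, 100, 0, 100], ![0, 100, 100, 100, 0], ![3, 2, 100, 1, 0],
    ![100, 0, 100, 100, 100], ![100, 100, 0, 100, 100]]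
def Cy : Fin 5 → Fin 5 → ℤ :=
  ![![100, 0, 100, 100, 0], ![0, 100, 0, 100, 100], ![3, 2, 100, 1, 0],
    ![100, 0, 100, 100, 100], ![100, 100, 100, 0, 100]]
def Cz : Fin 5 → Fin 5 → ℤ :=
  ![![100, 0, 0, 100, 100], ![0, 100, 100, 100, 0], ![3, 2, 100, 1, 0],
    ![0, 100, 100, 100, 100], ![100, 100, 100, 0, 100]]
def Cw : Fin 5 → Fin 5 → ℤ :=
  ![![100, 0, 100, 100, 0], ![0, 100, 100, 0, 100], ![3, 2, 100, 1, 0],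
    ![0, 100, 100, 100, 100], ![100, 100, 0, 100, 100]]

theorem conds_Cx : Conds Cx := by unfold Conds; decide +kernel
theorem conds_Cy : Conds Cy := by unfold Conds; decide +kernel
theorem conds_Cz : Conds Cz := by unfold Conds; decide +kernel
theorem conds_Cw : Conds Cw := by unfold Conds; decide +kernel

theorem uniqueOpt_σx : UniqueOpt (tourOf σx) Cx :=
  uniqueOpt_tourOf _ _ <| by
    simp only [Fin.forall_fin_succ_pi, Fin.forall_fin_zero_pi]; decide +kernel
theorem uniqueOpt_σy : UniqueOpt (tourOf σy) Cy :=
  uniqueOpt_tourOf _ _ <| by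
    simp only [Fin.forall_fin_succ_pi, Fin.forall_fin_zero_pi]; decide +kernel
theorem uniqueOpt_σz : UniqueOpt (tourOf σz) Cz :=
  uniqueOpt_tourOf _ _ <| by
    simp only [Fin.forall_fin_succ_pi, Fin.forall_fin_zero_pi]; decide +kernel
theorem uniqueOpt_σw : UniqueOpt (tourOf σw) Cw :=
  uniqueOpt_tourOf _ _ <| by
    simp only [Fin.forall_fin_succ_pi, Fin.forall_fin_zero_pi]; decide +kernel

namespace Conds

variable {C : Fin 5 → Fin 5 → ℤ}

theorem not_opt_σz (hC : Conds C) (h : C 3 0 > C 3 1) : ¬ Opt (tourOf σz) C := by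
  obtain ⟨_, _, _, _, _, _, _, _, _⟩ := hC
  refine not_opt_tourOf_of_lt (s := σz') (by decide +kernel) (by decide +kernel) ?_
  rw [Fin.sum_univ_five, Fin.sum_univ_five]
  change C 0 2 + C 1 0 + C 2 4 + C 3 1 + C 4 3 < C 0 2 + C 1 4 + C 2 1 + C 3 0 + C 4 3
  linarith

theorem not_opt_σw (hC : Conds C) (h : C 3 0 > C 3 1) : ¬ Opt (tourOf σw) C := by
  obtain ⟨_, _, _, _, _, _, _, _, _⟩ := hC
  refine not_opt_tourOf_of_lt (s := σw') (by decide +kernel) (by decide +kernel) ?_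
  rw [Fin.sum_univ_five, Fin.sum_univ_five]
  change C 0 4 + C 1 0 + C 2 3 + C 3 1 + C 4 2 < C 0 4 + C 1 3 + C 2 1 + C 3 0 + C 4 2
  linarith

theorem not_opt_σx (hC : Conds C) (h : C 3 0 ≤ C 3 1) : ¬ Opt (tourOf σx) C := by
  obtain ⟨_, _, _, _, _, _, _, _, _⟩ := hC
  refine not_opt_tourOf_of_lt (s := σx') (by decide +kernel) (by decide +kernel) ?_
  rw [Fin.sum_univ_five, Fin.sum_univ_five]
  change C 0 1 + C 1 4 + C 2 3 + C 3 0 + C 4 2 < C 0 3 + C 1 4 + C 2 0 + C 3 1 + C 4 2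
  linarith

theorem not_opt_σy (hC : Conds C) (h : C 3 0 ≤ C 3 1) : ¬ Opt (tourOf σy) C := by
  obtain ⟨_, _, _, _, _, _, _, _, _⟩ := hC
  refine not_opt_tourOf_of_lt (s := σy') (by decide +kernel) (by decide +kernel) ?_
  rw [Fin.sum_univ_five, Fin.sum_univ_five]
  change C 0 1 + C 1 2 + C 2 4 + C 3 0 + C 4 3 < C 0 4 + C 1 2 + C 2 0 + C 3 1 + C 4 3
  linarith

end Conds

/-- The combinatorial core of the paper: four pairwise distinct tours
`x, y, z, w` on 5 vertices, each uniquely optimal for some input satisfying the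
nine branching conditions; yet with the extra comparison `c₄₁ > c₄₂` neither
`z` nor `w` can be optimal, and with `c₄₁ ≤ c₄₂` neither `x` nor `y` can be. -/
theorem stmt13 :
    ∃ x y z w : Fin 5 → Fin 5 → ℤ,
      IsTour 5 x ∧ IsTour 5 y ∧ IsTour 5 z ∧ IsTour 5 w ∧
      x ≠ y ∧ x ≠ z ∧ x ≠ w ∧ y ≠ z ∧ y ≠ w ∧ z ≠ w ∧
      (∃ Cx, Conds Cx ∧ UniqueOpt x Cx) ∧
      (∃ Cy, Conds Cy ∧ UniqueOpt y Cy) ∧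
      (∃ Cz, Conds Cz ∧ UniqueOpt z Cz) ∧
      (∃ Cw, Conds Cw ∧ UniqueOpt w Cw) ∧
      (∀ C : Fin 5 → Fin 5 → ℤ, Conds C → C 3 0 > C 3 1 → ¬ Opt z C ∧ ¬ Opt w C) ∧
      (∀ C : Fin 5 → Fin 5 → ℤ, Conds C → C 3 0 ≤ C 3 1 → ¬ Opt x C ∧ ¬ Opt y C) := by
  refine ⟨tourOf σx, tourOf σy, tourOf σz, tourOf σw, ?_, ?_, ?_, ?_, ?_, ?_, ?_, ?_, ?_, ?_,
    ⟨Cx, conds_Cx, uniqueOpt_σx⟩, ⟨Cy, conds_Cy, uniqueOpt_σy⟩,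
    ⟨Cz, conds_Cz, uniqueOpt_σz⟩, ⟨Cw, conds_Cw, uniqueOpt_σw⟩,
    fun C hC h => ⟨hC.not_opt_σz h, hC.not_opt_σw h⟩,
    fun C hC h => ⟨hC.not_opt_σx h, hC.not_opt_σy h⟩⟩
  all_goals first
    | exact isTour_tourOf Nat.prime_five (by decide +kernel) (by decide +kernel)
    | exact tourOf_injective.ne (by decide +kernel)
end

section
/- For n = 4, any two distinct directed Hamiltonian cycles x, y on 4 vertices are adjacent as vertices of the traveling salesman polytope: there exists an integer cost vector C ∈ ℤ^{16} such that ⟨x,C⟩ = ⟨y,C⟩ < ⟨s,C⟩ for every Hamiltonian cycle s ∉ {x, y}. -/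
/-! With `C = -(x + y)` the cost of a tour `s` is `-(|s ∩ x| + |s ∩ y|)`, so both `x` and `y` cost
`-(4 + |x ∩ y|)`, while inclusion–exclusion gives `|s ∩ x| + |s ∩ y| ≤ 4 + |x ∩ y|` for every tour,
with equality only if `x ∩ y ⊆ s ⊆ x ∪ y`. On four vertices no third tour is squeezed in this way;
since there are only six tours, this is checked by enumeration. -/

open Equiv Finset

section InnerProduct

variable {n : ℕ}

lemma ip_comm (x y : Fin n → Fin n → ℤ) : ip x y = ip y x := by
  simp only [ip, mul_comm]

lemma ip_add_right (x y z : Fin n → Fin n → ℤ) : ip x (y + z) = ip x y + ip x z := by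
  simp only [ip, Pi.add_apply, mul_add, sum_add_distrib]

lemma ip_neg_right (x y : Fin n → Fin n → ℤ) : ip x (-y) = -ip x y := by
  simp only [ip, Pi.neg_apply, mul_neg, sum_neg_distrib]

lemma IsTour.ip_self {x : Fin n → Fin n → ℤ} (hx : IsTour n x) : ip x x = n := by
  obtain ⟨σ, -, -, hσ⟩ := hx
  simp [ip, hσ]

end InnerProduct

def fourCycles : List (Perm (Fin 4)) :=
  [[0, 1, 2, 3], [0, 1, 3, 2], [0, 2, 1, 3], [0, 2, 3, 1], [0, 3, 1, 2], [0, 3, 2, 1]].map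
    List.formPerm

-- A full-support permutation of `Fin 4` has cycle type (4) or (2, 2); squaring rules out the latter.
lemma mem_fourCycles_of_support_eq_univ :
    ∀ σ : Perm (Fin 4), σ.support = univ → σ ^ 2 ≠ 1 → σ ∈ fourCycles := by
  decide

lemma IsTour.exists_mem_fourCycles {x : Fin 4 → Fin 4 → ℤ} (hx : IsTour 4 x) :
    ∃ σ ∈ fourCycles, x = tourOf σ := by
  obtain ⟨σ, hcycle, hsupp, hσ⟩ := hx
  have horder : orderOf σ = 4 := by rw [hcycle.orderOf, hsupp, card_univ, Fintype.card_fin]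
  have hsq : σ ^ 2 ≠ 1 := fun h => by
    simpa [horder] using orderOf_dvd_of_pow_eq_one h
  exact ⟨σ, mem_fourCycles_of_support_eq_univ σ hsupp hsq, funext₂ hσ⟩

lemma ip_add_ip_lt_of_mem_fourCycles : ∀ σ ∈ fourCycles, ∀ τ ∈ fourCycles, ∀ ρ ∈ fourCycles,
    tourOf ρ ≠ tourOf σ → tourOf ρ ≠ tourOf τ →
      ip (tourOf ρ) (tourOf σ) + ip (tourOf ρ) (tourOf τ) < 4 + ip (tourOf σ) (tourOf τ) := by
  decide

theorem stmt16_general (x y : Fin 4 → Fin 4 → ℤ)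
    (hx : IsTour 4 x) (hy : IsTour 4 y) :
    ∃ C : Fin 4 → Fin 4 → ℤ,
      ip x C = ip y C ∧
      ∀ s : Fin 4 → Fin 4 → ℤ, IsTour 4 s → s ≠ x → s ≠ y → ip x C < ip s C := by
  have hcost : ip x (-(x + y)) = -(4 + ip x y) := by
    rw [ip_neg_right, ip_add_right, hx.ip_self]; rfl
  refine ⟨-(x + y), ?_, fun s hs hsx hsy => ?_⟩
  · rw [hcost, ip_neg_right, ip_add_right, hy.ip_self, ip_comm y x, add_comm]; rfl
  · obtain ⟨σ, hσ, rfl⟩ := hx.exists_mem_fourCycles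
    obtain ⟨τ, hτ, rfl⟩ := hy.exists_mem_fourCycles
    obtain ⟨ρ, hρ, rfl⟩ := hs.exists_mem_fourCycles
    have hlt := ip_add_ip_lt_of_mem_fourCycles σ hσ τ hτ ρ hρ hsx hsy
    rw [hcost, ip_neg_right, ip_add_right]
    omega

/-- Any two distinct directed Hamiltonian cycles on 4 vertices are adjacent
vertices of the TSP polytope: some integer input makes exactly them optimal. -/
theorem stmt16 (x y : Fin 4 → Fin 4 → ℤ)
    (hx : IsTour 4 x) (hy : IsTour 4 y) (hxy : x ≠ y) :
    ∃ C : Fin 4 → Fin 4 → ℤ,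
      ip x C = ip y C ∧
      ∀ s : Fin 4 → Fin 4 → ℤ, IsTour 4 s → s ≠ x → s ≠ y → ip x C < ip s C :=
  stmt16_general x y hx hy
end

section
/- Let y be a Hamiltonian cycle on n vertices and B ∈ ℤ^{n²} a vector of the form B⁺ − B⁻ with B⁺, B⁻ ∈ {0,1}^{n²}, ⟨B⁺,B⁻⟩ = 0 and ⟨B⁺, 1⟩ = ⟨B⁻, 1⟩ = 1 (i.e. B compares two single arc costs). Then the strict inequality ⟨B, C⟩ > 0 is compatible with C ∈ K(y): there exists C with ⟨B,C⟩ > 0 and y uniquely optimal for C. -/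
open Finset Equiv

lemma Fintype.exists_eq_ite_of_sum_eq_one {ι : Type*} [Fintype ι] [DecidableEq ι] {f : ι → ℤ}
    (hf : ∀ i, f i = 0 ∨ f i = 1) (hsum : ∑ i, f i = 1) :
    ∃ p, ∀ i, f i = if i = p then 1 else 0 := by
  have hf_ite : ∀ i, f i = if f i = 1 then 1 else 0 := fun i => by
    rcases hf i with h | h <;> simp [h]
  rw [Fintype.sum_congr _ _ hf_ite, sum_boole, Nat.cast_eq_one, card_eq_one] at hsum
  obtain ⟨p, hp⟩ := hsum
  refine ⟨p, fun i => ?_⟩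
  have hi : f i = 1 ↔ i = p := by simpa using Finset.ext_iff.mp hp i
  rw [hf_ite i]
  simp only [hi]

lemma Fintype.sum_ite_mk_apply_eq {α β : Type*} [Fintype α] [DecidableEq α] [DecidableEq β]
    (f : α → β) (p : α × β) :
    ∑ i, (if (i, f i) = p then (1 : ℤ) else 0) = if f p.1 = p.2 then 1 else 0 := by
  simp [Prod.ext_iff, ite_and]

lemma Equiv.Perm.two_le_card_filter_ne {α : Type*} [Fintype α] [DecidableEq α] {σ τ : Perm α}
    (h : σ ≠ τ) : 2 ≤ #{i | σ i ≠ τ i} := by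
  have hsupp : ({i | σ i ≠ τ i} : Finset α) = (σ⁻¹ * τ).support := by
    ext i
    rw [mem_filter_univ, Perm.mem_support, Perm.mul_apply, Ne, Ne, Perm.inv_eq_iff_eq, eq_comm]
  rw [hsupp]
  exact Perm.two_le_card_support_of_ne_one (by rwa [Ne, inv_mul_eq_one])

section SeparatingCost

variable {α : Type*} [DecidableEq α]

def separatingCost (σ : Perm α) (p q : α × α) (i j : α) : ℤ :=
  2 * (if σ i ≠ j then 1 else 0) + (if (i, j) = p then 1 else 0) - 2 * (if (i, j) = q then 1 else 0)

lemma separatingCost_sub_pos (σ : Perm α) {p q : α × α} (h : p ≠ q) :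
    0 < separatingCost σ p q p.1 p.2 - separatingCost σ p q q.1 q.2 := by
  simp only [separatingCost, Prod.mk.eta, if_pos, if_neg h, if_neg h.symm]
  split_ifs <;> omega

variable [Fintype α]

lemma sum_separatingCost (σ : Perm α) (ρ : α → α) (p q : α × α) :
    ∑ i, separatingCost σ p q i (ρ i) =
      2 * #{i | σ i ≠ ρ i} + (if ρ p.1 = p.2 then 1 else 0) - 2 * (if ρ q.1 = q.2 then 1 else 0) := by
  simp only [separatingCost, sum_sub_distrib, sum_add_distrib, ← mul_sum, Fintype.sum_ite_mk_apply_eq,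
    natCast_card_filter]

/-- Distinct permutations differ in at least two points, so the penalty `2` per changed arc
outweighs the `-2` on `q` together with the `+1` on `p`. -/
lemma sum_separatingCost_lt {σ ρ : Perm α} (h : σ ≠ ρ) (p q : α × α) :
    ∑ i, separatingCost σ p q i (σ i) < ∑ i, separatingCost σ p q i (ρ i) := by
  have hcard := Perm.two_le_card_filter_ne h
  rw [sum_separatingCost, sum_separatingCost]
  simp only [ne_self_iff_false, filter_false, card_empty, Nat.cast_zero]
  split_ifs <;> omega

end SeparatingCost

lemma ip_eq_sum_apply {n : ℕ} {x : Fin n → Fin n → ℤ} {ρ : Fin n → Fin n}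
    (hx : ∀ i j, x i j = if ρ i = j then 1 else 0) (C : Fin n → Fin n → ℤ) :
    ip x C = ∑ i, C i (ρ i) := by
  simp [ip, hx]

lemma ip_single {n : ℕ} (p : Fin n × Fin n) (C : Fin n → Fin n → ℤ) :
    ip (fun i j => if (i, j) = p then 1 else 0) C = C p.1 p.2 := by
  simp [ip, Prod.ext_iff, ite_and]

lemma exists_eq_single_of_ip_one {n : ℕ} {B : Fin n → Fin n → ℤ}
    (h01 : ∀ i j, B i j = 0 ∨ B i j = 1) (h1 : ip B (fun _ _ => 1) = 1) :
    ∃ p : Fin n × Fin n, B = fun i j => if (i, j) = p then 1 else 0 := by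
  rw [ip, ← Fintype.sum_prod_type'] at h1
  simp only [mul_one] at h1
  obtain ⟨p, hp⟩ := Fintype.exists_eq_ite_of_sum_eq_one (fun x => h01 x.1 x.2) h1
  exact ⟨p, funext₂ fun i j => hp (i, j)⟩

/-- If `B = B⁺ - B⁻` compares two single arc costs (each of `B⁺, B⁻` is 0/1
with exactly one unit entry, disjointly placed), then for any tour `y` the
strict inequality `⟨B, C⟩ > 0` is compatible with `y` being uniquely optimal. -/
theorem stmt17 (n : ℕ) (y Bp Bm : Fin n → Fin n → ℤ)
    (hy : IsTour n y)
    (hBp : ∀ i j, Bp i j = 0 ∨ Bp i j = 1)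
    (hBm : ∀ i j, Bm i j = 0 ∨ Bm i j = 1)
    (horth : ip Bp Bm = 0)
    (hp1 : ip Bp (fun _ _ => 1) = 1)
    (hm1 : ip Bm (fun _ _ => 1) = 1) :
    ∃ C : Fin n → Fin n → ℤ,
      0 < ip Bp C - ip Bm C ∧
      ∀ x : Fin n → Fin n → ℤ, IsTour n x → x ≠ y → ip y C < ip x C := by
  obtain ⟨σ, -, -, hyσ⟩ := hy
  obtain ⟨p, rfl⟩ := exists_eq_single_of_ip_one hBp hp1
  obtain ⟨q, rfl⟩ := exists_eq_single_of_ip_one hBm hm1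
  have hpq : p ≠ q := by
    rintro rfl
    simp [ip_single] at horth
  refine ⟨separatingCost σ p q, ?_, ?_⟩
  · simpa only [ip_single] using separatingCost_sub_pos σ hpq
  · rintro x ⟨ρ, -, -, hxρ⟩ hxy
    have hσρ : σ ≠ ρ := by
      rintro rfl
      exact hxy (funext₂ fun i j => by rw [hxρ, hyσ])
    rw [ip_eq_sum_apply hyσ, ip_eq_sum_apply hxρ]
    exact sum_separatingCost_lt hσρ p q
end

section
/- If a linear separating tree for a problem X has the direct-type property (for every inner node B and every clique Y ⊆ X, min{|R_B⁺ ∩ Y|, |R_B⁻ ∩ Y|} ≤ 1), then its height is at least ω(X) − 1, where ω(X) is the maximum size of a clique of pairwise adjacent solutions in X. -/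
/-- A finite binary tree with leaves labelled by elements of `α`: an abstract
model of a linear separating tree. -/
inductive BTree (α : Type) where
  | leaf : α → BTree α
  | node : BTree α → BTree α → BTree α

/-- The set of labels occurring at the leaves of a tree. -/
def BTree.leaves {α : Type} [DecidableEq α] : BTree α → Finset α
  | .leaf a => {a}
  | .node l r => l.leaves ∪ r.leaves

/-- The height of a tree (number of comparisons on a longest root-leaf path). -/
def BTree.height {α : Type} : BTree α → ℕ
  | .leaf _ => 0
  | .node l r => max l.height r.height + 1

/-- The direct-type condition: at every inner node `B` with children leaf-label
sets `X_B⁺` (left) and `X_B⁻` (right), for every clique `Y ⊆ X` with respect to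
`adj` we have `min |R_B⁺ ∩ Y| |R_B⁻ ∩ Y| ≤ 1`, where `R_B⁺ = X_B⁻ \ X_B⁺` and
`R_B⁻ = X_B⁺ \ X_B⁻`. -/
def BTree.DirectType {α : Type} [DecidableEq α]
    (adj : α → α → Prop) (X : Finset α) : BTree α → Prop
  | .leaf _ => True
  | .node l r =>
      (∀ Y : Finset α, Y ⊆ X → (∀ a ∈ Y, ∀ b ∈ Y, a ≠ b → adj a b) →
        min ((r.leaves \ l.leaves) ∩ Y).card ((l.leaves \ r.leaves) ∩ Y).card ≤ 1) ∧
      l.DirectType adj X ∧ r.DirectType adj X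

/-!
At an inner node, the direct-type condition says that all but at most one element of a clique
`Y` of leaf labels lies below one of the two children. Descending into that child loses at
most one clique element per level, and a leaf holds only one label, so `|Y| ≤ height + 1`.
-/

open Finset

theorem Finset.sdiff_inter_eq_sdiff_of_subset_union {α : Type} [DecidableEq α]
    {A B Y : Finset α} (h : Y ⊆ A ∪ B) : (B \ A) ∩ Y = Y \ A := by
  ext x
  have := @h x
  simp only [mem_inter, mem_sdiff, mem_union] at *
  tauto

theorem Finset.card_le_card_inter_add_one {α : Type} [DecidableEq α]
    {A Y : Finset α} (h : (Y \ A).card ≤ 1) : Y.card ≤ (Y ∩ A).card + 1 := by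
  have := card_inter_add_card_sdiff Y A
  omega

theorem BTree.DirectType.card_le_height_add_one {α : Type} [DecidableEq α]
    {adj : α → α → Prop} {X : Finset α} {T : BTree α} (hD : T.DirectType adj X)
    {Y : Finset α} (hYX : Y ⊆ X) (hY : (Y : Set α).Pairwise adj) (hYT : Y ⊆ T.leaves) :
    Y.card ≤ T.height + 1 := by
  induction T generalizing Y with
  | leaf a => simpa [BTree.height, BTree.leaves] using card_le_card hYT
  | node l r ihl ihr =>
    obtain ⟨hroot, hl, hr⟩ := hD
    have hYlr : Y ⊆ l.leaves ∪ r.leaves := hYT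
    have hmin := hroot Y hYX hY
    rw [sdiff_inter_eq_sdiff_of_subset_union hYlr,
      sdiff_inter_eq_sdiff_of_subset_union (union_comm l.leaves r.leaves ▸ hYlr)] at hmin
    simp only [BTree.height]
    rcases min_le_iff.mp hmin with hle | hle
    · have hchild := ihl hl (inter_subset_left.trans hYX) (hY.mono inter_subset_left)
        inter_subset_right
      have hsplit := card_le_card_inter_add_one hle
      omega
    · have hchild := ihr hr (inter_subset_left.trans hYX) (hY.mono inter_subset_left)
        inter_subset_right
      have hsplit := card_le_card_inter_add_one hle
      omega

/-- Bondarenko's height bound: a direct-type linear separating tree in which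
every solution of `X` occurs as a leaf label has height at least `|Y| - 1`
for every clique `Y ⊆ X`, hence at least `ω(X) - 1`. -/
theorem stmt18 {α : Type} [DecidableEq α]
    (adj : α → α → Prop) (X : Finset α) (T : BTree α)
    (hX : X ⊆ T.leaves) (hD : T.DirectType adj X)
    (Y : Finset α) (hYX : Y ⊆ X)
    (hclq : ∀ a ∈ Y, ∀ b ∈ Y, a ≠ b → adj a b) :
    Y.card - 1 ≤ T.height := by
  have := hD.card_le_height_add_one hYX hclq (hYX.trans hX)
  omega
end
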